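/- arXiv:2311.01488 — 2 statements merged into one kernel-verified Lean document; each statement's English description precedes it below -/
import Mathlib

section
/- Let n be a positive integer and let G be a simple graph that contains every tree on n vertices as a subgraph. Then the number of edges of G is at least ∑_{k=1}^{⌊n/2⌋} (⌊n/k⌋ − 1). -/
/-!
For each `k ≤ n / 2` there is a tree on `n` vertices containing `k` vertex-disjoint stars with
`⌊n/k⌋ - 1` leaves each, so `G` contains such stars too. Fewer than `k` vertices cannot meet all of
them, so the centres `v₁, v₂, …` can be chosen greedily: the star of `v_k` avoids `v₁, …, v_{k-1}`,
and its `⌊n/k⌋ - 1` edges are incident to none of the earlier centres, hence are new.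
-/

/-- A simple graph `G` contains a copy of a simple graph `H` (as a subgraph) if there is an
injective map from the vertices of `H` to the vertices of `G` sending edges to edges. -/
def ContainsCopy {V W : Type*} (G : SimpleGraph V) (H : SimpleGraph W) : Prop :=
  ∃ f : W → V, Function.Injective f ∧ ∀ ⦃a b⦄, H.Adj a b → G.Adj (f a) (f b)

open Finset Function

namespace SimpleGraph

section ParentGraph

variable {W : Type*} [LinearOrder W] [OrderBot W] {p : W → W}

def parentGraph (p : W → W) : SimpleGraph W :=
  fromRel fun a b => a ≠ ⊥ ∧ b = p a

lemma parentGraph_adj_parent {a : W} (ha : a ≠ ⊥) (hp : p a < a) :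
    (parentGraph p).Adj a (p a) :=
  ⟨hp.ne', Or.inl ⟨ha, rfl⟩⟩

lemma parentGraph_reachable_bot [WellFoundedLT W] (hp : ∀ a ≠ ⊥, p a < a) (a : W) :
    (parentGraph p).Reachable a ⊥ := by
  induction a using WellFoundedLT.induction with
  | _ a ih =>
    by_cases ha : a = ⊥
    · rw [ha]
    · exact (parentGraph_adj_parent ha (hp a ha)).reachable.trans (ih _ (hp a ha))

lemma parentGraph_connected [WellFoundedLT W] (hp : ∀ a ≠ ⊥, p a < a) :
    (parentGraph p).Connected :=
  Connected.mk fun a b =>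
    (parentGraph_reachable_bot hp a).trans (parentGraph_reachable_bot hp b).symm

lemma parentGraph_edgeSet (hp : ∀ a ≠ ⊥, p a < a) :
    (parentGraph p).edgeSet = Set.range fun a : {a : W // a ≠ ⊥} => s(a.1, p a) := by
  ext e
  induction e using Sym2.ind with
  | _ x y =>
    simp only [mem_edgeSet, parentGraph, fromRel_adj, Set.mem_range, Subtype.exists]
    constructor
    · rintro ⟨-, ⟨hx, rfl⟩ | ⟨hy, rfl⟩⟩
      · exact ⟨x, hx, rfl⟩
      · exact ⟨y, hy, Sym2.eq_swap⟩
    · rintro ⟨a, ha, hxy⟩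
      rcases Sym2.eq_iff.1 hxy with ⟨rfl, rfl⟩ | ⟨rfl, rfl⟩
      · exact ⟨(hp a ha).ne', Or.inl ⟨ha, rfl⟩⟩
      · exact ⟨(hp a ha).ne, Or.inr ⟨ha, rfl⟩⟩

/-- An edge `s(a, p a)` determines `a` as its larger endpoint. -/
lemma injective_mk_parent (hp : ∀ a ≠ ⊥, p a < a) :
    Injective fun a : {a : W // a ≠ ⊥} => s(a.1, p a) := by
  rintro ⟨a, ha⟩ ⟨b, hb⟩ hab
  rcases Sym2.eq_iff.1 hab with ⟨h, -⟩ | ⟨h, h'⟩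
  · exact Subtype.ext h
  · exact (lt_irrefl a (calc a = p b := h
      _ < b := hp b hb
      _ = p a := h'.symm
      _ < a := hp a ha)).elim

lemma parentGraph_isTree [Finite W] (hp : ∀ a ≠ ⊥, p a < a) : (parentGraph p).IsTree := by
  refine isTree_iff_connected_and_card.2 ⟨parentGraph_connected hp, ?_⟩
  rw [parentGraph_edgeSet hp, Nat.card_range_of_injective (injective_mk_parent hp)]
  have := Fintype.ofFinite W
  rw [Nat.card_eq_fintype_card, Nat.card_eq_fintype_card, Fintype.card_subtype_compl,
    Fintype.card_subtype_eq, Nat.sub_add_cancel Fintype.card_pos]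

end ParentGraph

variable {V : Type*}

section DisjointStars

variable {G : SimpleGraph V}

/-- `G` contains `k` vertex-disjoint stars with `d` leaves each; `φ (j, 0)` is the centre of the
`j`-th star and `φ (j, t.succ)` its leaves. -/
def HasDisjointStars (G : SimpleGraph V) (k d : ℕ) : Prop :=
  ∃ φ : Fin k × Fin (d + 1) → V, Injective φ ∧ ∀ j (t : Fin d), G.Adj (φ (j, 0)) (φ (j, t.succ))

lemma HasDisjointStars.of_containsCopy {W : Type*} {T : SimpleGraph W} {k d : ℕ}
    (hGT : ContainsCopy G T) (hT : T.HasDisjointStars k d) : G.HasDisjointStars k d := by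
  obtain ⟨f, hf, hfadj⟩ := hGT
  obtain ⟨φ, hφ, hφadj⟩ := hT
  exact ⟨f ∘ φ, hf.comp hφ, fun j t => hfadj (hφadj j t)⟩

/-- Fewer than `k` vertices cannot meet all of `k` disjoint stars, so one star survives intact. -/
lemma HasDisjointStars.exists_notMem_le_card_neighborFinset_sdiff [DecidableEq V]
    [G.LocallyFinite] {k d : ℕ} (hG : G.HasDisjointStars k d) {S : Finset V} (hS : #S < k) :
    ∃ v ∉ S, d ≤ #(G.neighborFinset v \ S) := by
  obtain ⟨φ, hφ, hadj⟩ := hG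
  obtain ⟨j, hj⟩ : ∃ j : Fin k, ∀ t, φ (j, t) ∉ S := by
    by_contra! hmeet
    choose t ht using hmeet
    have := card_le_card_of_injOn (s := univ) (fun j => φ (j, t j)) (fun j _ => ht j)
      fun a _ b _ hab => congrArg Prod.fst (hφ hab)
    simp only [card_univ, Fintype.card_fin] at this
    omega
  refine ⟨φ (j, 0), hj 0, ?_⟩
  calc d = #(univ.image fun t : Fin d => φ (j, t.succ)) := by
        rw [card_image_of_injective _ fun a b hab =>
          Fin.succ_injective _ (congrArg Prod.snd (hφ hab))]
        simp
    _ ≤ #(G.neighborFinset (φ (j, 0)) \ S) := by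
        refine card_le_card fun x hx => ?_
        obtain ⟨t, -, rfl⟩ := mem_image.1 hx
        exact mem_sdiff.2 ⟨(G.mem_neighborFinset _ _).2 (hadj j t), hj _⟩

/-- Witness: the tree in which every vertex `i` of `Fin n` hangs from the first vertex of its block of
`d + 1` consecutive vertices, and the first vertex of each block hangs from `0`. -/
lemma exists_isTree_hasDisjointStars {n k d : ℕ} (hn : 0 < n) (h : k * (d + 1) ≤ n) :
    ∃ T : SimpleGraph (Fin n), T.IsTree ∧ T.HasDisjointStars k d := by
  have : NeZero n := ⟨hn.ne'⟩
  set m := d + 1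
  let p : Fin n → Fin n := fun i => if (i : ℕ) % m = 0 then ⊥ else ⟨i - i % m, by omega⟩
  have hp : ∀ i ≠ ⊥, p i < i := by
    intro i hi
    by_cases him : (i : ℕ) % m = 0
    · simpa [p, him] using bot_lt_iff_ne_bot.2 hi
    · simp only [p, him, if_false, Fin.lt_def]
      have := Nat.mod_le i m
      omega
  refine ⟨parentGraph p, parentGraph_isTree hp, Fin.castLE h ∘ finProdFinEquiv,
    (Fin.castLE_injective h).comp finProdFinEquiv.injective, fun j t => ?_⟩
  set x := (Fin.castLE h ∘ finProdFinEquiv) (j, t.succ)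
  have hx_val : (x : ℕ) = t + 1 + m * j := rfl
  have hx_mod : (x : ℕ) % m = t + 1 := by
    rw [hx_val, Nat.add_mul_mod_self_left, Nat.mod_eq_of_lt (by omega)]
  have hx : x ≠ ⊥ := by
    rw [Ne, Fin.ext_iff, bot_eq_zero, hx_val]
    simp
  have hpx : p x = (Fin.castLE h ∘ finProdFinEquiv) (j, 0) := by
    simp only [p, hx_mod, if_neg (Nat.succ_ne_zero _)]
    ext
    simp [hx_val, finProdFinEquiv]
  exact hpx ▸ (parentGraph_adj_parent hx (hp x hx)).symm

end DisjointStars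

section Greedy

variable [DecidableEq V] [Fintype V] (G : SimpleGraph V) [DecidableRel G.Adj]

def edgesMeeting (S : Finset V) : Finset (Sym2 V) :=
  {e ∈ G.edgeFinset | ∃ v ∈ S, v ∈ e}

lemma card_edgesMeeting_add_card_neighborFinset_sdiff_le {S : Finset V} {v : V} (hv : v ∉ S) :
    #(G.edgesMeeting S) + #(G.neighborFinset v \ S) ≤ #(G.edgesMeeting (insert v S)) := by
  have hdisj : Disjoint (G.edgesMeeting S) ((G.neighborFinset v \ S).image (s(v, ·))) := by
    rw [Finset.disjoint_right]
    simp only [edgesMeeting, mem_image, mem_sdiff, mem_filter]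
    rintro _ ⟨x, ⟨-, hx⟩, rfl⟩ ⟨-, w, hw, hwe⟩
    rcases Sym2.mem_iff.1 hwe with rfl | rfl
    exacts [hv hw, hx hw]
  rw [← card_image_of_injOn (s := G.neighborFinset v \ S) fun a _ b _ h => Sym2.congr_right.1 h,
    ← card_union_of_disjoint hdisj]
  refine card_le_card (union_subset ?_ ?_)
  · intro e he
    simp only [edgesMeeting, mem_filter, mem_insert] at he ⊢
    obtain ⟨he, w, hw, hwe⟩ := he
    exact ⟨he, w, Or.inr hw, hwe⟩
  · simp only [subset_iff, edgesMeeting, mem_image, mem_sdiff, mem_neighborFinset, mem_filter,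
      mem_insert]
    rintro _ ⟨x, ⟨hx, -⟩, rfl⟩
    exact ⟨G.mem_edgeFinset.2 hx, v, Or.inl rfl, Sym2.mem_mk_left v x⟩

/-- Greedy choice of centres: the `k`-th centre avoids the earlier ones and contributes `d k`
edges not incident to any of them. -/
lemma sum_le_card_edgeFinset_of_forall_exists_neighbors_sdiff (d : ℕ → ℕ) (K : ℕ)
    (h : ∀ k ∈ Icc 1 K, ∀ S : Finset V, #S < k → ∃ v ∉ S, d k ≤ #(G.neighborFinset v \ S)) :
    ∑ k ∈ Icc 1 K, d k ≤ #G.edgeFinset := by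
  suffices ∀ j ≤ K, ∃ S : Finset V, #S = j ∧ ∑ k ∈ Icc 1 j, d k ≤ #(G.edgesMeeting S) by
    obtain ⟨S, -, hS⟩ := this K le_rfl
    exact hS.trans (card_le_card (filter_subset _ _))
  intro j hj
  induction j with
  | zero => exact ⟨∅, rfl, by simp⟩
  | succ j ih =>
    obtain ⟨S, hS, hsum⟩ := ih (by omega)
    obtain ⟨v, hv, hdv⟩ := h (j + 1) (mem_Icc.2 ⟨by omega, hj⟩) S (by omega)
    refine ⟨insert v S, by rw [card_insert_of_notMem hv, hS], ?_⟩
    rw [sum_Icc_succ_top (by omega)]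
    exact (add_le_add hsum hdv).trans (G.card_edgesMeeting_add_card_neighborFinset_sdiff_le hv)

end Greedy

end SimpleGraph

theorem sum_le_edges_of_contains_all_trees_general {V : Type*} [Fintype V]
    (n : ℕ) (G : SimpleGraph V) [DecidableRel G.Adj]
    (hG : ∀ T : SimpleGraph (Fin n), T.IsTree → ContainsCopy G T) :
    ∑ k ∈ Finset.Icc 1 (n / 2), (n / k - 1) ≤ G.edgeFinset.card := by
  classical
  refine G.sum_le_card_edgeFinset_of_forall_exists_neighbors_sdiff _ _ fun k hk S hS => ?_
  obtain ⟨hk1, hk⟩ := mem_Icc.1 hk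
  have hnk : k * (n / k - 1 + 1) ≤ n := by
    rw [Nat.sub_add_cancel (Nat.div_pos (by omega) hk1)]
    exact Nat.mul_div_le n k
  obtain ⟨T, hT, hstars⟩ := SimpleGraph.exists_isTree_hasDisjointStars (by omega) hnk
  exact (hstars.of_containsCopy (hG T hT)).exists_notMem_le_card_neighborFinset_sdiff hS

/-- If a finite simple graph `G` contains every tree on `n` vertices as a subgraph, then
`G` has at least `∑_{k=1}^{⌊n/2⌋} (⌊n/k⌋ − 1)` edges. -/
theorem sum_le_edges_of_contains_all_trees {V : Type*} [Fintype V]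
    (n : ℕ) (hn : 0 < n) (G : SimpleGraph V) [DecidableRel G.Adj]
    (hG : ∀ T : SimpleGraph (Fin n), T.IsTree → ContainsCopy G T) :
    ∑ k ∈ Finset.Icc 1 (n / 2), (n / k - 1) ≤ G.edgeFinset.card :=
  sum_le_edges_of_contains_all_trees_general n G hG
end

section
/- For every positive integer n, the sum ∑_{k=1}^{⌊n/2⌋} (⌊n/k⌋ − 1) is at least n·log(n) − 3n, where log denotes the natural logarithm. -/
open Finset in
/-- For every positive integer `n`, the sum `∑_{k=1}^{⌊n/2⌋} (⌊n/k⌋ − 1)` is at least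
`n·log n − 3n`. -/
theorem sum_floor_div_ge (n : ℕ) (hn : 0 < n) :
    (n : ℝ) * Real.log n - 3 * n ≤ ∑ k ∈ Finset.Icc 1 (n / 2), ((n / k : ℕ) - 1 : ℝ) := by
  set m := n / 2 with hm
  rcases Nat.lt_or_ge n 2 with h2 | h2
  · interval_cases n
    norm_num [hm]
  -- n ≥ 2, m ≥ 1
  have hm1 : 1 ≤ m := Nat.one_le_div_iff (by norm_num) |>.mpr h2
  have h2m : 2 * m ≤ n := Nat.mul_div_le n 2 |>.trans_eq rfl |> fun _ => Nat.mul_div_le n 2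
  have hn2m : n ≤ 2 * m + 1 := by omega
  -- step 1: pointwise bound
  have step1 : ∑ k ∈ Finset.Icc 1 m, ((n : ℝ) / k - 2) ≤
      ∑ k ∈ Finset.Icc 1 m, ((n / k : ℕ) - 1 : ℝ) := by
    apply Finset.sum_le_sum
    intro k hk
    have hk1 : 1 ≤ k := (Finset.mem_Icc.mp hk).1
    have hkpos : (0 : ℝ) < k := by exact_mod_cast hk1
    have hlt : (n : ℝ) < ((n / k : ℕ) + 1) * k := by
      have h1 : n = k * (n / k) + n % k := (Nat.div_add_mod n k).symm
      have h2 : n % k < k := Nat.mod_lt n (by omega)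
      have h3 : n < (n / k + 1) * k := by
        rw [add_mul, one_mul, mul_comm]; omega
      exact_mod_cast h3
    have : (n : ℝ) / k < (n / k : ℕ) + 1 := by
      rw [div_lt_iff₀ hkpos]; exact hlt
    linarith
  refine le_trans ?_ step1
  -- step 2: sum equals n * harmonic m - 2m
  have step2 : ∑ k ∈ Finset.Icc 1 m, ((n : ℝ) / k - 2) =
      (n : ℝ) * (harmonic m : ℝ) - 2 * m := by
    have hsum : ∑ k ∈ Finset.Icc 1 m, (n : ℝ) / k = (n : ℝ) * ∑ k ∈ Finset.Icc 1 m, (k : ℝ)⁻¹ := by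
      rw [Finset.mul_sum]
      exact Finset.sum_congr rfl fun k _ => div_eq_mul_inv _ _
    rw [Finset.sum_sub_distrib, hsum, Finset.sum_const, Nat.card_Icc, Nat.add_sub_cancel,
      nsmul_eq_mul, harmonic_eq_sum_Icc]
    push_cast
    ring
  rw [step2]
  have hharm : Real.log (m + 1) ≤ (harmonic m : ℝ) := by
    have := log_add_one_le_harmonic m
    push_cast at this ⊢
    exact this
  have hnpos : (0 : ℝ) < n := by exact_mod_cast hn
  have key : (n : ℝ) * Real.log (m + 1) - 2 * m ≤ (n : ℝ) * (harmonic m : ℝ) - 2 * m := by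
    have := mul_le_mul_of_nonneg_left hharm (le_of_lt hnpos)
    linarith
  refine le_trans ?_ key
  -- need: n log n - 3n ≤ n log(m+1) - 2m
  have hlog : Real.log n ≤ Real.log (m + 1) + Real.log 2 := by
    rw [← Real.log_mul (by positivity) (by norm_num)]
    apply Real.log_le_log hnpos
    have : (n : ℝ) ≤ 2 * m + 2 := by
      have : (n : ℝ) ≤ 2 * m + 1 := by exact_mod_cast hn2m
      linarith
    linarith
  have hlog2 : Real.log 2 ≤ 1 := by
    have := Real.log_le_sub_one_of_pos (show (0:ℝ) < 2 by norm_num)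
    linarith
  have hmn : (2 : ℝ) * m ≤ n := by exact_mod_cast h2m
  nlinarith [mul_le_mul_of_nonneg_left hlog (le_of_lt hnpos),
    mul_le_mul_of_nonneg_left hlog2 (le_of_lt hnpos)]
end
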